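/- arXiv:1703.00746 — 5 statements merged into one kernel-verified Lean document; each statement's English description precedes it below -/
import Mathlib

section
/- Let R be a commutative Noetherian ring, N a finitely generated R-module, M a submodule of N, and I an ideal of R. Define M :_N ⟨I⟩ to be the union of the submodules (M :_N Iⁿ) over all n ≥ 0 (which is the eventual stable value of this chain). Then the set of associated primes of N/(M :_N ⟨I⟩) equals {p ∈ Ass_R(N/M) : I ⊄ p}, i.e., Ass_R(N/(M :_N ⟨I⟩)) = Ass_R(N/M) \ V(I). -/
/-- The colon submodule `(P :_M I) = {x ∈ M | I • x ⊆ P}`. -/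
def Submodule.colonIdeal {R : Type*} [CommRing R] {M : Type*} [AddCommGroup M] [Module R M]
    (P : Submodule R M) (I : Ideal R) : Submodule R M where
  carrier := {x | ∀ r ∈ I, r • x ∈ P}
  add_mem' := fun ha hb r hr => by
    simpa [smul_add] using P.add_mem (ha r hr) (hb r hr)
  zero_mem' := fun r hr => by simp
  smul_mem' := fun c {x} hx r hr => by
    rw [smul_comm]
    exact P.smul_mem c (hx r hr)

/-- `(P :_M ⟨I⟩) = ⋃ n, (P :_M Iⁿ)`, the ultimate constant value of the chain `(P :_M Iⁿ)`. -/
def Submodule.colonInfty {R : Type*} [CommRing R] {M : Type*} [AddCommGroup M] [Module R M]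
    (P : Submodule R M) (I : Ideal R) : Submodule R M :=
  ⨆ n : ℕ, P.colonIdeal (I ^ n)

/-!
Since `N` is Noetherian, the chain `M :_N Iⁿ` stabilises, so `Q := M :_N ⟨I⟩` equals `M :_N Iⁿ`
for some `n` and satisfies `Q :_N I = Q`. Associated primes of `N/L` are the prime ideals of the
form `(L :_R x)`. If `(Q :_R x) = p` is prime, then `I ⊄ p`, since otherwise `x ∈ Q :_N I = Q`;
if `I ⊄ p`, then for `s ∈ I \ p` the three ideals `(M :_R x) ⊆ (Q :_R x) ⊆ (M :_R sⁿx)` agree as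
soon as one of `(M :_R x)` or `(Q :_R x)` equals `p`, because multiplying by `sⁿ ∉ p` does not
change a prime colon ideal.
-/

namespace Submodule

variable {R M : Type*} [CommRing R] [AddCommGroup M] [Module R M]

theorem colon_mkQ_singleton (N : Submodule R M) (x : M) :
    (⊥ : Submodule R (M ⧸ N)).colon {N.mkQ x} = N.colon {x} := by
  ext r
  simp only [mem_colon_singleton, mkQ_apply, ← Quotient.mk_smul, mem_bot, Quotient.mk_eq_zero]

theorem isAssociatedPrime_quotient_iff {N : Submodule R M} {p : Ideal R} :
    IsAssociatedPrime p (M ⧸ N) ↔ N.IsAssociatedPrime p := by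
  simp only [IsAssociatedPrime, Submodule.isAssociatedPrime_def, N.mkQ_surjective.exists,
    colon_mkQ_singleton]

theorem associatedPrimes_quotient (N : Submodule R M) :
    associatedPrimes R (M ⧸ N) = N.associatedPrimes :=
  Set.ext fun _ => isAssociatedPrime_quotient_iff

theorem colon_smul_singleton_eq_of_notMem {N : Submodule R M} {x : M} {p : Ideal R} [p.IsPrime]
    (hx : N.colon {x} = p) {t : R} (ht : t ∉ p) : N.colon {t • x} = p := by
  ext r
  rw [mem_colon_singleton, smul_smul, ← mem_colon_singleton, hx,
    Ideal.IsPrime.mul_mem_right_iff ht]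

theorem mem_colonIdeal_iff_le_colon {P : Submodule R M} {J : Ideal R} {x : M} :
    x ∈ P.colonIdeal J ↔ J ≤ P.colon {x} :=
  forall₂_congr fun _ _ => mem_colon_singleton.symm

theorem le_colonIdeal (P : Submodule R M) (J : Ideal R) : P ≤ P.colonIdeal J :=
  fun _ hx r _ => P.smul_mem r hx

theorem colonIdeal_antitone (P : Submodule R M) : Antitone P.colonIdeal :=
  fun _ _ hJ _ hx r hr => hx r (hJ hr)

theorem colonIdeal_colonIdeal (P : Submodule R M) (J K : Ideal R) :
    (P.colonIdeal J).colonIdeal K = P.colonIdeal (J * K) := by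
  ext x
  show (∀ k ∈ K, ∀ j ∈ J, j • k • x ∈ P) ↔ _
  rw [mem_colonIdeal_iff_le_colon, Ideal.mul_le]
  simp only [mem_colon_singleton, mul_smul]
  exact forall₂_comm

theorem colon_colonIdeal_le_colon_smul {P : Submodule R M} {J : Ideal R} {t : R} (ht : t ∈ J)
    (x : M) : (P.colonIdeal J).colon {x} ≤ P.colon {t • x} := fun r hr => by
  rw [mem_colon_singleton, smul_comm]
  exact mem_colon_singleton.1 hr t ht

theorem colonIdeal_pow_le_colonInfty (P : Submodule R M) (I : Ideal R) (n : ℕ) :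
    P.colonIdeal (I ^ n) ≤ P.colonInfty I :=
  le_iSup (fun n : ℕ => P.colonIdeal (I ^ n)) n

theorem exists_colonInfty_eq_colonIdeal_pow [IsNoetherian R M] (P : Submodule R M) (I : Ideal R) :
    ∃ n, P.colonInfty I = P.colonIdeal (I ^ n) :=
  let chain : ℕ →o Submodule R M :=
    ⟨fun n => P.colonIdeal (I ^ n), P.colonIdeal_antitone.comp (f := (I ^ ·)) fun _ _ h =>
      Ideal.pow_le_pow_right h⟩
  ⟨monotonicSequenceLimitIndex chain, WellFoundedGT.iSup_eq_monotonicSequenceLimit chain⟩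

theorem associatedPrimes_colonIdeal_pow [IsNoetherianRing R] {P : Submodule R M} {I : Ideal R}
    {n : ℕ} (hn : P.colonIdeal (I ^ (n + 1)) ≤ P.colonIdeal (I ^ n)) :
    (P.colonIdeal (I ^ n)).associatedPrimes = P.associatedPrimes \ {p | I ≤ p} := by
  ext p
  simp only [Set.mem_sdiff, Set.mem_ofPred_eq, AssociatePrimes.mem_iff,
    Submodule.isAssociatedPrime_iff]
  constructor
  · rintro ⟨hp, x, rfl⟩
    have hI : ¬I ≤ (P.colonIdeal (I ^ n)).colon {x} := fun h => by
      refine hp.ne_top ((colon_eq_top_iff_subset _).2 (Set.singleton_subset_iff.2 (hn ?_)))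
      rw [pow_succ, ← colonIdeal_colonIdeal]
      exact mem_colonIdeal_iff_le_colon.2 h
    obtain ⟨s, hsI, hsp⟩ := SetLike.not_le_iff_exists.1 hI
    refine ⟨⟨hp, s ^ n • x, le_antisymm ?_ ?_⟩, hI⟩
    · exact colon_colonIdeal_le_colon_smul (Ideal.pow_mem_pow hsI n) x
    calc P.colon {s ^ n • x} ≤ (P.colonIdeal (I ^ n)).colon {s ^ n • x} :=
          colon_mono (le_colonIdeal _ _) le_rfl
      _ = _ := colon_smul_singleton_eq_of_notMem rfl fun h => hsp (hp.mem_of_pow_mem n h)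
  · rintro ⟨⟨hp, x, rfl⟩, hI⟩
    obtain ⟨s, hsI, hsp⟩ := SetLike.not_le_iff_exists.1 hI
    refine ⟨hp, x, le_antisymm (colon_mono (le_colonIdeal _ _) le_rfl) ?_⟩
    calc (P.colonIdeal (I ^ n)).colon {x} ≤ P.colon {s ^ n • x} :=
          colon_colonIdeal_le_colon_smul (Ideal.pow_mem_pow hsI n) x
      _ = _ := colon_smul_singleton_eq_of_notMem rfl fun h => hsp (hp.mem_of_pow_mem n h)

end Submodule

/-- `Ass_R (N/(M :_N ⟨I⟩)) = Ass_R (N/M) \ V(I)`. -/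
theorem associatedPrimes_quotient_colonInfty {R : Type*} [CommRing R] [IsNoetherianRing R]
    {M : Type*} [AddCommGroup M] [Module R M] [Module.Finite R M]
    (P : Submodule R M) (I : Ideal R) :
    associatedPrimes R (M ⧸ P.colonInfty I) =
      associatedPrimes R (M ⧸ P) \ {p : Ideal R | I ≤ p} := by
  obtain ⟨n, hn⟩ := P.exists_colonInfty_eq_colonIdeal_pow I
  have hstable : P.colonIdeal (I ^ (n + 1)) ≤ P.colonIdeal (I ^ n) :=
    hn ▸ P.colonIdeal_pow_le_colonInfty I (n + 1)
  rw [Submodule.associatedPrimes_quotient, Submodule.associatedPrimes_quotient, hn]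
  exact Submodule.associatedPrimes_colonIdeal_pow hstable
end

section
/- Let R be a commutative Noetherian ring, I an ideal of R, and N a nonzero finitely generated R-module. Then the associated primes of the Rees module N[It] = ⊕_{n≥0} IⁿN over the Rees ring R[It] = ⊕_{n≥0} Iⁿtⁿ are exactly the primes of the form ⊕_{n≥0} (Iⁿ ∩ p) for p ∈ Ass_R(N); that is, Ass_{R[It]}(N[It]) = { ⊕_{n≥0} (Iⁿ ∩ p) : p ∈ Ass_R(N) }. -/
universe u

open Polynomial in
/-- The homogeneous ideal `⊕ₙ (Iⁿ ∩ p)tⁿ` of the Rees algebra `R[It]`, consisting of those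
elements all of whose coefficients lie in `p`. -/
def reesInter {R : Type*} [CommRing R] (I p : Ideal R) : Ideal (reesAlgebra I) where
  carrier := {f | ∀ n : ℕ, (f : R[X]).coeff n ∈ p}
  add_mem' := fun ha hb n => by
    simpa using p.add_mem (ha n) (hb n)
  zero_mem' := fun n => by simp
  smul_mem' := by
    intro c f hf n
    show ((c * f : reesAlgebra I) : R[X]).coeff n ∈ p
    rw [Subalgebra.coe_mul, Polynomial.coeff_mul]
    exact Ideal.sum_mem p fun x _ => p.mul_mem_left _ (hf x.2)

/-!
Associated primes here are radicals of annihilators. If `g • x = 0` in `M[X]` and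
`natDegree g ≤ D`, comparing coefficients in the top degree shows that `g.coeff D` kills the top
coefficient of `x`; as `g` also kills `g.coeff D • x`, which has fewer nonzero coefficients,
induction makes `g.coeff D` nilpotent on `x`. Applied to `g = fᵐ` and `D = m * natDegree f`, this
puts the leading coefficient of every `f ∈ √ann_{R[X]} x` into `√ann_R x`, and peeling off leading
terms gives `√ann_{R[X]} x = (√ann_R x)[X]`. Intersecting with `R[It]`, the radical of the
annihilator of `x ∈ N[It]` is `⊕ₙ (Iⁿ ∩ √ann_R x)`. When it is prime, so is its contraction
`√ann_R x`, which equals `√ann_R xⱼ` for some coefficient `xⱼ` of `x`, because `ann_R x` is the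
finite intersection of the `ann_R xⱼ`. Conversely `√ann_R m` arises from `m` placed in degree `0`.
-/

open Polynomial Submodule

theorem Ideal.le_map_C_of_leadingCoeff_le {R : Type*} [CommRing R] {J : Ideal R[X]} {p : Ideal R}
    (hp : map C p ≤ J) (hJ : J.leadingCoeff ≤ p) : J ≤ map C p := by
  intro f hf
  induction hn : f.support.card generalizing f with
  | zero => simp_all
  | succ n ih =>
    have hlead : monomial f.natDegree f.leadingCoeff ∈ map C p := by
      rw [← C_mul_X_pow_eq_monomial]
      exact mul_mem_right _ _ (mem_map_of_mem C (hJ ((J.mem_leadingCoeff _).2 ⟨f, hf, rfl⟩)))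
    have herase : f.eraseLead ∈ map C p := by
      refine ih ?_ (card_support_eraseLead' hn)
      rw [← self_sub_monomial_natDegree_leadingCoeff]
      exact J.sub_mem hf (hp hlead)
    rw [← eraseLead_add_monomial_natDegree_leadingCoeff f]
    exact add_mem herase hlead

namespace PolynomialModule

variable {R M : Type*} [CommRing R] [AddCommGroup M] [Module R M]

@[simp]
theorem coeff_smul (r : R) (x : PolynomialModule R M) (n : ℕ) :
    (r • x).coeff n = r • x.coeff n :=
  rfl

theorem coeff_smul_add_of_natDegree_le {g : R[X]} {x : PolynomialModule R M} {D e : ℕ}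
    (hD : g.natDegree ≤ D) (he : ∀ j, e < j → x.coeff j = 0) :
    (g • x).coeff (D + e) = g.coeff D • x.coeff e := by
  rw [smul_apply, Finset.sum_eq_single_of_mem (D, e) (by simp)]
  rintro ⟨i, j⟩ hij hne
  rw [Finset.HasAntidiagonal.mem_antidiagonal] at hij
  rcases lt_or_ge D i with hi | hi
  · rw [coeff_eq_zero_of_natDegree_lt (hD.trans_lt hi), zero_smul]
  · rw [he j (by grind), smul_zero]

theorem coeff_mem_radical_colon_of_smul_eq_zero {g : R[X]} {x : PolynomialModule R M}
    (hgx : g • x = 0) {D : ℕ} (hD : g.natDegree ≤ D) :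
    g.coeff D ∈ ((⊥ : Submodule R (PolynomialModule R M)).colon {x}).radical := by
  induction hn : x.coeff.support.card using Nat.strong_induction_on generalizing x with
  | _ n ih =>
  obtain rfl | hx := eq_or_ne x 0
  · exact Ideal.le_radical (by simp [mem_colon_singleton])
  have hsupp : x.coeff.support.Nonempty := by simpa using hx
  set e := x.coeff.support.max' hsupp
  have hce : g.coeff D • x.coeff e = 0 := by
    rw [← coeff_smul_add_of_natDegree_le hD, hgx]
    · rfl
    · intro j hj
      by_contra h
      exact (x.coeff.support.le_max' j (Finsupp.mem_support_iff.2 h)).not_gt hj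
  have hss : (g.coeff D • x).coeff.support ⊂ x.coeff.support :=
    (Finset.ssubset_iff_of_subset Finsupp.support_smul).2
      ⟨e, x.coeff.support.max'_mem hsupp, by simpa using hce⟩
  obtain ⟨k, hk⟩ := ih _ (hn ▸ Finset.card_lt_card hss) (by rw [smul_comm, hgx, smul_zero]) rfl
  exact ⟨k + 1, by simpa [mem_colon_singleton, pow_succ, mul_smul] using hk⟩

theorem radical_colon_eq_map_C (x : PolynomialModule R M) :
    ((⊥ : Submodule R[X] (PolynomialModule R M)).colon {x}).radical =
      Ideal.map C ((⊥ : Submodule R (PolynomialModule R M)).colon {x}).radical := by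
  set K := (⊥ : Submodule R (PolynomialModule R M)).colon {x}
  have hK : Ideal.map C K ≤ (⊥ : Submodule R[X] (PolynomialModule R M)).colon {x} := by
    rw [Ideal.map_le_iff_le_comap]
    intro r hr
    rw [Ideal.mem_comap, mem_colon_singleton, ← algebraMap_eq, algebraMap_smul]
    exact mem_colon_singleton.1 hr
  have hmap := (Ideal.map_radical_le C).trans (Ideal.radical_mono hK)
  refine le_antisymm (Ideal.le_map_C_of_leadingCoeff_le hmap ?_) hmap
  intro a ha
  obtain ⟨f, ⟨m, hm⟩, rfl⟩ := (Ideal.mem_leadingCoeff _ _).1 ha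
  have hlc := coeff_mem_radical_colon_of_smul_eq_zero (mem_colon_singleton.1 hm) natDegree_pow_le
  rw [coeff_pow_mul_natDegree] at hlc
  exact Ideal.mem_radical_of_pow_mem hlc

theorem colon_single (n : ℕ) (m : M) :
    (⊥ : Submodule R (PolynomialModule R M)).colon {single R n m} =
      (⊥ : Submodule R M).colon {m} := by
  ext r
  simp [mem_colon_singleton, ← single_smul, ← coeff_eq_zero]

end PolynomialModule

theorem IsAssociatedPrime.of_polynomialModule {R M : Type*} [CommRing R] [AddCommGroup M]
    [Module R M] {p : Ideal R} (h : IsAssociatedPrime p (PolynomialModule R M)) :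
    IsAssociatedPrime p M := by
  obtain ⟨hp, x, rfl⟩ := h
  have hinf : x.coeff.support.inf (fun j ↦ (⊥ : Submodule R M).colon {x.coeff j}) ≤
      (⊥ : Submodule R (PolynomialModule R M)).colon {x} := by
    intro r hr
    rw [Submodule.mem_finsetInf] at hr
    rw [mem_colon_singleton, mem_bot]
    ext j
    by_cases hj : j ∈ x.coeff.support
    · simpa [mem_colon_singleton] using hr j hj
    · simp_all
  obtain ⟨j, -, hj⟩ := hp.inf_le'.1 (hinf.trans Ideal.le_radical)
  refine ⟨hp, x.coeff j, le_antisymm (Ideal.radical_mono fun r hr ↦ ?_) (hp.radical_le_iff.2 hj)⟩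
  rw [mem_colon_singleton, mem_bot] at hr ⊢
  simpa using congr(($hr).coeff j)

section Rees

variable {R : Type*} [CommRing R] (I : Ideal R) {M : Type*} [AddCommGroup M] [Module R M]

theorem reesInter_eq_comap_map_C (J : Ideal R) :
    reesInter I J = (Ideal.map C J).comap (reesAlgebra I).val := by
  ext f
  exact Ideal.mem_map_C_iff.symm

instance reesInter_isPrime (p : Ideal R) [p.IsPrime] : (reesInter I p).IsPrime := by
  rw [reesInter_eq_comap_map_C]
  infer_instance

theorem comap_algebraMap_reesInter (J : Ideal R) :
    (reesInter I J).comap (algebraMap R (reesAlgebra I)) = J := by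
  ext r
  simp only [reesInter_eq_comap_map_C, Ideal.mem_comap, Ideal.mem_map_C_iff]
  refine ⟨fun h ↦ by simpa using h 0, fun h n ↦ ?_⟩
  by_cases hn : n = 0 <;> simp [coeff_C, hn, h]

theorem radical_colon_eq_reesInter {S : Submodule (reesAlgebra I) (PolynomialModule R M)}
    (X : S) :
    ((⊥ : Submodule (reesAlgebra I) S).colon {X}).radical =
      reesInter I
        ((⊥ : Submodule R (PolynomialModule R M)).colon {(X : PolynomialModule R M)}).radical := by
  rw [reesInter_eq_comap_map_C, ← PolynomialModule.radical_colon_eq_map_C, Ideal.comap_radical]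
  congr 1
  ext f
  simp only [Ideal.mem_comap, mem_colon_singleton, mem_bot]
  exact Submodule.coe_eq_zero.symm

theorem single_zero_mem_stableFiltration_submodule {N : Submodule R M} {m : M} (hm : m ∈ N) :
    PolynomialModule.single R 0 m ∈ (I.stableFiltration N).submodule := by
  rw [Ideal.Filtration.mem_submodule]
  rintro (_ | i)
  · simpa using hm
  · simp

end Rees

theorem associatedPrimes_reesModule_general {R : Type u} [CommRing R]
    {M : Type u} [AddCommGroup M] [Module R M]
    (I : Ideal R) :
    associatedPrimes (reesAlgebra I)
        (↥((I.stableFiltration (⊤ : Submodule R M)).submodule)) =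
      {q : Ideal (reesAlgebra I) | ∃ p ∈ associatedPrimes R M, q = reesInter I p} := by
  ext q
  constructor
  · rintro ⟨hq, X, rfl⟩
    have hqP := radical_colon_eq_reesInter I X
    set P := ((⊥ : Submodule R (PolynomialModule R M)).colon {(X : PolynomialModule R M)}).radical
    have hP : P.IsPrime := by
      rw [← comap_algebraMap_reesInter I P, ← hqP]
      exact Ideal.comap_isPrime _ _
    exact ⟨P, IsAssociatedPrime.of_polynomialModule ⟨hP, _, rfl⟩, hqP⟩
  · rintro ⟨p, ⟨hp, m, rfl⟩, rfl⟩
    have hX := radical_colon_eq_reesInter I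
      ⟨_, single_zero_mem_stableFiltration_submodule I (Submodule.mem_top (x := m))⟩
    rw [PolynomialModule.colon_single] at hX
    exact ⟨reesInter_isPrime I _, _, hX.symm⟩

/-- `Ass_{R[It]} (N[It]) = { ⊕ₙ (Iⁿ ∩ p)tⁿ : p ∈ Ass_R N }`, where the Rees
module `N[It] = ⊕ₙ IⁿN tⁿ` is realized as the submodule of `PolynomialModule R N` attached to
the `I`-adic (stable) filtration on `N`. -/
theorem associatedPrimes_reesModule {R : Type u} [CommRing R] [IsNoetherianRing R]
    {M : Type u} [AddCommGroup M] [Module R M] [Module.Finite R M] [Nontrivial M]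
    (I : Ideal R) :
    associatedPrimes (reesAlgebra I)
        (↥((I.stableFiltration (⊤ : Submodule R M)).submodule)) =
      {q : Ideal (reesAlgebra I) | ∃ p ∈ associatedPrimes R M, q = reesInter I p} :=
  associatedPrimes_reesModule_general I
end

section
/- Let R be a commutative Noetherian ring, I an ideal of R, and N an R-module. Let {N_n}_{n≥0} be an I-filtration of N (a decreasing chain of submodules with I·N_n ⊆ N_{n+1} for all n). If the associated graded Rees module ⊕_{n≥0} N_n is finitely generated over the Rees ring R[It], then there exists an integer k such that N_{n+k} = Iⁿ·N_k for all n ≥ 0. -/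
universe u

/-! Taking constant terms of finitely many generators of the Rees module spans `N₀ = M`, so `M` is a
finite module over the Noetherian ring `R`. Then every `Nₙ` is finitely generated, and for such
filtrations finite generation of the Rees module is equivalent to stability. -/

open Polynomial PolynomialModule

theorem PolynomialModule.coeff_smul_zero {R M : Type*} [CommRing R] [AddCommGroup M] [Module R M]
    (f : R[X]) (g : PolynomialModule R M) : (f • g).coeff 0 = f.coeff 0 • g.coeff 0 := by
  simp [smul_apply]

theorem PolynomialModule.coeff_zero_mem_span_of_mem_span {R M : Type*} [CommRing R]
    [AddCommGroup M] [Module R M] {S : Set (PolynomialModule R M)} {f : PolynomialModule R M}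
    (hf : f ∈ Submodule.span R[X] S) :
    f.coeff 0 ∈ Submodule.span R ((fun g : PolynomialModule R M => g.coeff 0) '' S) := by
  induction hf using Submodule.span_induction with
  | mem g hg => exact Submodule.subset_span ⟨g, hg, rfl⟩
  | zero => simp
  | add g h _ _ hg hh => simpa using add_mem hg hh
  | smul p g _ hg => simpa [coeff_smul_zero] using Submodule.smul_mem _ (p.coeff 0) hg

theorem Ideal.Filtration.module_finite_of_submodule_fg {R M : Type u} [CommRing R]
    [AddCommGroup M] [Module R M] {I : Ideal R} {F : I.Filtration M} (hF0 : F.N 0 = ⊤)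
    (hF : F.submodule.FG) : Module.Finite R M := by
  classical
  obtain ⟨S, hS⟩ := hF
  refine ⟨⟨S.image (fun g : PolynomialModule R M => g.coeff 0), eq_top_iff.2 fun m _ => ?_⟩⟩
  have hm : single R 0 m ∈ F.submodule := by
    rw [← F.submodule_span_single]
    exact Submodule.subset_span (Set.mem_iUnion_of_mem 0 ⟨m, hF0 ▸ trivial, rfl⟩)
  rw [← hS] at hm
  simpa using coeff_zero_mem_span_of_mem_span (Submodule.span_le_restrictScalars (reesAlgebra I) R[X] _ hm)

/-- If `{Nₙ}` is an `I`-filtration of `N` (with `N₀ = N`) whose Rees module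
`⊕ₙ Nₙ` is finitely generated over the Rees ring `R[It]`, then there exists `k` such that
`N_{n+k} = Iⁿ • N_k` for all `n ≥ 0`. -/
theorem filtration_stable_of_submodule_fg {R : Type u} [CommRing R] [IsNoetherianRing R]
    {M : Type u} [AddCommGroup M] [Module R M]
    (I : Ideal R) (F : I.Filtration M) (hF0 : F.N 0 = ⊤)
    (hF : F.submodule.FG) :
    ∃ k : ℕ, ∀ n : ℕ, F.N (n + k) = I ^ n • F.N k := by
  have : Module.Finite R M := F.module_finite_of_submodule_fg hF0 hF
  have hstable : F.Stable :=
    (F.submodule_fg_iff_stable fun i => IsNoetherian.noetherian (F.N i)).mp hF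
  obtain ⟨k, hk⟩ := hstable.exists_pow_smul_eq
  exact ⟨k, fun n => by rw [add_comm, hk]⟩
end

section
/- Let (R, m) be a Noetherian local ring, I an ideal of R, and N an R-module. Set N_n = (IⁿN :_N ⟨m⟩), the union over s ≥ 0 of (IⁿN :_N mˢ). If the module ⊕_{n≥0} N_n is finitely generated over the Rees ring R[It], then there exists an integer k ≥ 0 such that (I^{n+k}N :_N ⟨m⟩) ⊆ IⁿN for all n ≥ 0. -/
/-!
Finite generation of `⊕ₙ Nₙ` over the Rees algebra forces the filtration `Nₙ` to be
`I`-stable: the generators live in degrees `≤ k`, so `N_{n+k} = Iⁿ N_k ⊆ Iⁿ N`.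
-/

universe u

namespace Ideal.Filtration

open PolynomialModule

variable {R M : Type*} [CommRing R] [AddCommGroup M] [Module R M] {I : Ideal R}

noncomputable def spanLE (F : I.Filtration M) :
    ℕ →o Submodule (reesAlgebra I) (PolynomialModule R M) where
  toFun n₀ := Submodule.span _ (⋃ i ≤ n₀, single R i '' (F.N i : Set M))
  monotone' _ _ h := Submodule.span_mono <|
    Set.iUnion₂_subset fun i hi => Set.subset_iUnion₂_of_subset i (hi.trans h) subset_rfl

theorem iSup_spanLE (F : I.Filtration M) : ⨆ n₀, F.spanLE n₀ = F.submodule := by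
  rw [← submodule_span_single, ← Set.biUnion_le_eq_iUnion]
  exact (Submodule.span_iUnion _).symm

theorem Stable.of_submodule_fg {F : I.Filtration M} (hF : F.submodule.FG) : F.Stable := by
  obtain ⟨n₀, hn₀⟩ := hF.stabilizes_of_iSup_eq F.spanLE F.iSup_spanLE
  exact ⟨n₀, (F.submodule_eq_span_le_iff_stable_ge n₀).1 hn₀⟩

end Ideal.Filtration

theorem colonInfty_maximalIdeal_le_smul_pow_general {R : Type u} [CommRing R]
    [IsLocalRing R] {M : Type u} [AddCommGroup M] [Module R M]
    (I : Ideal R) (F : I.Filtration M)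
    (hFN : ∀ n : ℕ, F.N n =
      (I ^ n • ⊤ : Submodule R M).colonInfty (IsLocalRing.maximalIdeal R))
    (hF : F.submodule.FG) :
    ∃ k : ℕ, ∀ n : ℕ,
      (I ^ (n + k) • ⊤ : Submodule R M).colonInfty (IsLocalRing.maximalIdeal R) ≤
        I ^ n • ⊤ := by
  obtain ⟨k, hk⟩ := (Ideal.Filtration.Stable.of_submodule_fg hF).exists_pow_smul_eq
  refine ⟨k, fun n => ?_⟩
  rw [← hFN, add_comm, hk]
  exact smul_mono_right _ le_top

/-- Let `(R, 𝔪)` be Noetherian local, `I` an ideal, `N` an `R`-module, and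
`Nₙ = (IⁿN :_N ⟨𝔪⟩)`. If `⊕ₙ Nₙ` is finitely generated over the Rees ring `R[It]`, then there
exists `k ≥ 0` with `(I^{n+k}N :_N ⟨𝔪⟩) ⊆ IⁿN` for all `n ≥ 0`. -/
theorem colonInfty_maximalIdeal_le_smul_pow {R : Type u} [CommRing R] [IsNoetherianRing R]
    [IsLocalRing R] {M : Type u} [AddCommGroup M] [Module R M]
    (I : Ideal R) (F : I.Filtration M)
    (hFN : ∀ n : ℕ, F.N n =
      (I ^ n • ⊤ : Submodule R M).colonInfty (IsLocalRing.maximalIdeal R))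
    (hF : F.submodule.FG) :
    ∃ k : ℕ, ∀ n : ℕ,
      (I ^ (n + k) • ⊤ : Submodule R M).colonInfty (IsLocalRing.maximalIdeal R) ≤
        I ^ n • ⊤ :=
  colonInfty_maximalIdeal_le_smul_pow_general I F hFN hF
end

section
/- Let R be a commutative Noetherian ring, N a finitely generated R-module, I an ideal of R with N/IN ≠ 0, S a multiplicatively closed subset of R, and suppose for each prime q in a finite set Λ ⊆ Spec(R) there exists k_q ≥ 0 such that (S(I^{n+k_q}N))_q ⊆ (IⁿN)_q for all n ≥ 0, where Λ contains Ass_R(N/IⁿN) for all n. Then with k = max{k_q : q ∈ Λ}, one has S(I^{n+k}N) ⊆ IⁿN for all n ≥ 0. -/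
/-- The `S`-saturation `S(P) = ⋃_{s ∈ S} (P :_M s)` of a submodule `P`. -/
def Submodule.sat {R : Type*} [CommRing R] {M : Type*} [AddCommGroup M] [Module R M]
    (S : Submonoid R) (P : Submodule R M) : Submodule R M where
  carrier := {x | ∃ s ∈ S, s • x ∈ P}
  add_mem' := by
    rintro a b ⟨s, hs, hsa⟩ ⟨t, ht, htb⟩
    refine ⟨s * t, S.mul_mem hs ht, ?_⟩
    rw [smul_add]
    refine P.add_mem ?_ ?_
    · rw [mul_smul, smul_comm]; exact P.smul_mem t hsa
    · rw [mul_smul]; exact P.smul_mem s htb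
  zero_mem' := ⟨1, S.one_mem, by simp⟩
  smul_mem' := fun c x => by
    rintro ⟨s, hs, hsx⟩
    exact ⟨s, hs, by rw [smul_comm]; exact P.smul_mem c hsx⟩

theorem Submodule.sat_mono {R M : Type*} [CommRing R] [AddCommGroup M] [Module R M]
    (S : Submonoid R) {P Q : Submodule R M} (hPQ : P ≤ Q) : P.sat S ≤ Q.sat S :=
  fun _ ⟨s, hs, hsx⟩ => ⟨s, hs, hPQ hsx⟩

/-- The localization criterion, with `∃ s ∉ p, s • x ∈ L` standing for `x ∈ L_p`. -/
theorem Submodule.mem_of_forall_associatedPrimes {R M : Type*} [CommRing R]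
    [IsNoetherianRing R] [AddCommGroup M] [Module R M] {L : Submodule R M} {x : M}
    (h : ∀ p ∈ associatedPrimes R (M ⧸ L), ∃ s ∉ p, s • x ∈ L) : x ∈ L := by
  by_contra hx
  have hx' : L.mkQ x ≠ 0 := by rwa [ne_eq, mkQ_apply, Quotient.mk_eq_zero]
  obtain ⟨p, hp, hann⟩ := exists_le_isAssociatedPrime_of_isNoetherianRing R _ hx'
  obtain ⟨s, hsp, hsx⟩ := h p hp
  refine hsp (hann ?_)
  rwa [mem_colon_singleton, mem_bot, ← map_smul, mkQ_apply, Quotient.mk_eq_zero]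

theorem sat_pow_le_of_localized_general {R : Type*} [CommRing R] [IsNoetherianRing R]
    {M : Type*} [AddCommGroup M] [Module R M]
    (I : Ideal R) (S : Submonoid R)
    (Λ : Finset (Ideal R))
    (hΛ : ∀ n : ℕ, associatedPrimes R (M ⧸ (I ^ n • ⊤ : Submodule R M)) ⊆ Λ)
    (h : ∀ q ∈ Λ, ∃ k : ℕ, ∀ n : ℕ,
      ∀ x ∈ Submodule.sat S (I ^ (n + k) • ⊤ : Submodule R M),
        ∃ s ∉ q, s • x ∈ (I ^ n • ⊤ : Submodule R M)) :
    ∃ k : ℕ, ∀ n : ℕ,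
      Submodule.sat S (I ^ (n + k) • ⊤ : Submodule R M) ≤ I ^ n • ⊤ := by
  choose! k hk using h
  refine ⟨Λ.sup k, fun n x hx => Submodule.mem_of_forall_associatedPrimes fun q hq => ?_⟩
  have hqΛ : q ∈ Λ := hΛ n hq
  have hpow : (I ^ (n + Λ.sup k) • ⊤ : Submodule R M) ≤ I ^ (n + k q) • ⊤ :=
    Submodule.smul_mono_left (Ideal.pow_le_pow_right (Nat.add_le_add_left (Finset.le_sup hqΛ) n))
  exact hk q hqΛ n x (Submodule.sat_mono S hpow hx)

/-- Let `Λ` be a finite set of primes containing `Ass_R (N/IⁿN)` for all `n`.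
If for each `q ∈ Λ` there is `k_q ≥ 0` with `(S(I^{n+k_q}N))_q ⊆ (IⁿN)_q` for all `n`, then
(taking `k = max {k_q}`) there is `k` with `S(I^{n+k}N) ⊆ IⁿN` for all `n`. -/
theorem sat_pow_le_of_localized {R : Type*} [CommRing R] [IsNoetherianRing R]
    {M : Type*} [AddCommGroup M] [Module R M] [Module.Finite R M]
    (I : Ideal R) (hI : (I • ⊤ : Submodule R M) ≠ ⊤) (S : Submonoid R)
    (Λ : Finset (Ideal R)) (hΛp : ∀ q ∈ Λ, (q : Ideal R).IsPrime)
    (hΛ : ∀ n : ℕ, associatedPrimes R (M ⧸ (I ^ n • ⊤ : Submodule R M)) ⊆ Λ)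
    (h : ∀ q ∈ Λ, ∃ k : ℕ, ∀ n : ℕ,
      ∀ x ∈ Submodule.sat S (I ^ (n + k) • ⊤ : Submodule R M),
        ∃ s ∉ q, s • x ∈ (I ^ n • ⊤ : Submodule R M)) :
    ∃ k : ℕ, ∀ n : ℕ,
      Submodule.sat S (I ^ (n + k) • ⊤ : Submodule R M) ≤ I ^ n • ⊤ :=
  sat_pow_le_of_localized_general I S Λ hΛ h
end
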